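/- In a finite category C, any two H-equivalent arrows of the consolidation monoid C^cd that are both arrows of C must be coterminal: they have the same source object and the same target object. -/
import Mathlib


/-- A finite category presented by its set of arrows with a partial composition. -/
structure FinCat (Obj : Type) where
  Arr : Type
  src : Arr → Obj
  tgt : Arr → Obj
  id : Obj → Arr
  comp : (f g : Arr) → tgt f = src g → Arr
  src_id : ∀ a, src (id a) = a
  tgt_id : ∀ a, tgt (id a) = a
  src_comp : ∀ f g h, src (comp f g h) = src f
  tgt_comp : ∀ f g h, tgt (comp f g h) = tgt g
  id_comp : ∀ (f : Arr) (h : tgt (id (src f)) = src f), comp (id (src f)) f h = f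
  comp_id : ∀ (f : Arr) (h : tgt f = src (id (tgt f))), comp f (id (tgt f)) h = f
  assoc : ∀ (f g k : Arr) (h1 : tgt f = src g) (h2 : tgt g = src k) h3 h4,
    comp (comp f g h1) k h3 = comp f (comp g k h2) h4

/-- The underlying set of the consolidation monoid `C^cd`:
arrows of `C` together with an adjoined zero and identity. -/
inductive Cd {Obj : Type} (C : FinCat Obj) where
  | zero : Cd C
  | one : Cd C
  | arr : C.Arr → Cd C

variable {Obj : Type} [DecidableEq Obj]

/-- Multiplication of the consolidation: composition where defined, `0` otherwise,
with `1` an adjoined identity and `0` absorbing. -/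
def cdMul (C : FinCat Obj) : Cd C → Cd C → Cd C
  | .one, x => x
  | .zero, _ => .zero
  | x, .one => x
  | _, .zero => .zero
  | .arr f, .arr g => if h : C.tgt f = C.src g then .arr (C.comp f g h) else .zero

theorem cdMul_zero (C : FinCat Obj) (x : Cd C) : cdMul C x Cd.zero = Cd.zero := by
  cases x <;> rfl
theorem cdZero_mul (C : FinCat Obj) (x : Cd C) : cdMul C Cd.zero x = Cd.zero := by
  cases x <;> rfl
theorem cdMul_one (C : FinCat Obj) (x : Cd C) : cdMul C x Cd.one = x := by
  cases x <;> rfl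
theorem cdOne_mul (C : FinCat Obj) (x : Cd C) : cdMul C Cd.one x = x := by
  cases x <;> rfl

theorem cdMul_assoc (C : FinCat Obj) (x y z : Cd C) :
    cdMul C (cdMul C x y) z = cdMul C x (cdMul C y z) := by
  cases x <;> cases y <;> cases z <;>
    (try simp only [cdMul_zero, cdZero_mul, cdMul_one, cdOne_mul]) <;> (try rfl)
  case arr.arr.arr f g k =>
    by_cases h1 : C.tgt f = C.src g
    · by_cases h2 : C.tgt g = C.src k
      · show cdMul C (dite _ _ _) _ = cdMul C _ (dite _ _ _)
        rw [dif_pos h1, dif_pos h2]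
        show dite _ _ _ = dite _ _ _
        rw [dif_pos (show C.tgt (C.comp f g h1) = C.src k by rw [C.tgt_comp]; exact h2),
            dif_pos (show C.tgt f = C.src (C.comp g k h2) by rw [C.src_comp]; exact h1)]
        exact congrArg Cd.arr (C.assoc f g k h1 h2 _ _)
      · show cdMul C (dite _ _ _) _ = cdMul C _ (dite _ _ _)
        rw [dif_pos h1, dif_neg h2]
        show dite _ _ _ = Cd.zero
        rw [dif_neg (show ¬ C.tgt (C.comp f g h1) = C.src k by rw [C.tgt_comp]; exact h2)]
    · show cdMul C (dite _ _ _) _ = cdMul C _ (cdMul C _ _)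
      rw [dif_neg h1]
      by_cases h2 : C.tgt g = C.src k
      · show Cd.zero = cdMul C _ (dite _ _ _)
        rw [dif_pos h2]
        show Cd.zero = dite _ _ _
        rw [dif_neg (show ¬ C.tgt f = C.src (C.comp g k h2) by rw [C.src_comp]; exact h1)]
      · show Cd.zero = cdMul C _ (dite _ _ _)
        rw [dif_neg h2, cdMul_zero]

instance cdMonoid (C : FinCat Obj) : Monoid (Cd C) where
  mul := cdMul C
  one := .one
  one_mul x := by cases x <;> rfl
  mul_one x := by cases x <;> rfl
  mul_assoc := cdMul_assoc C

/-- Green's R-equivalence in a monoid. -/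
def RE {M : Type} [Monoid M] (s t : M) : Prop := (∃ a, s * a = t) ∧ (∃ a, t * a = s)
/-- Green's L-equivalence in a monoid. -/
def LE' {M : Type} [Monoid M] (s t : M) : Prop := (∃ a, a * s = t) ∧ (∃ a, a * t = s)
/-- Green's H-equivalence in a monoid. -/
def HE {M : Type} [Monoid M] (s t : M) : Prop := RE s t ∧ LE' s t
/-- Green's J-equivalence in a monoid. -/
def JE {M : Type} [Monoid M] (s t : M) : Prop :=
  (∃ a b, a * s * b = t) ∧ (∃ a b, a * t * b = s)

/-- Green's R-equivalence relative to a subset `S` (multipliers taken in `S`). -/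
def REOn {M : Type} [Monoid M] (S : Set M) (s t : M) : Prop :=
  (∃ a ∈ S, s * a = t) ∧ (∃ a ∈ S, t * a = s)
def LEOn {M : Type} [Monoid M] (S : Set M) (s t : M) : Prop :=
  (∃ a ∈ S, a * s = t) ∧ (∃ a ∈ S, a * t = s)
def HEOn {M : Type} [Monoid M] (S : Set M) (s t : M) : Prop := REOn S s t ∧ LEOn S s t
def JEOn {M : Type} [Monoid M] (S : Set M) (s t : M) : Prop :=
  (∃ a ∈ S, ∃ b ∈ S, a * s * b = t) ∧ (∃ a ∈ S, ∃ b ∈ S, a * t * b = s)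

/-- The local monoid `C_c = C(c,c)`, viewed as a subset of the consolidation. -/
def locSet (C : FinCat Obj) (c : Obj) : Set (Cd C) :=
  {x | ∃ f : C.Arr, x = Cd.arr f ∧ C.src f = c ∧ C.tgt f = c}

/-- two H-equivalent elements of `C^cd` which are arrows of `C`
are coterminal: same source and same target. -/
theorem stmt_8 (C : FinCat Obj) [Fintype Obj] [Fintype C.Arr] (f g : C.Arr)
    (h : HE (Cd.arr f : Cd C) (Cd.arr g)) :
    C.src f = C.src g ∧ C.tgt f = C.tgt g := by
  obtain ⟨⟨⟨a, ha⟩, _⟩, ⟨b, hb⟩, _⟩ := h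
  constructor
  · -- from arr f * a = arr g
    cases a with
    | zero => simp [HMul.hMul, Mul.mul, cdMul_zero] at ha
    | one =>
      have : (Cd.arr f : Cd C) = Cd.arr g := by
        rw [← ha]; exact (cdMul_one C _).symm
      cases this; rfl
    | arr k =>
      have : cdMul C (Cd.arr f) (Cd.arr k) = Cd.arr g := ha
      by_cases hk : C.tgt f = C.src k
      · rw [show cdMul C (Cd.arr f) (Cd.arr k) = Cd.arr (C.comp f k hk) from dif_pos hk] at this
        cases this
        exact (C.src_comp f k hk).symm
      · rw [show cdMul C (Cd.arr f) (Cd.arr k) = Cd.zero from dif_neg hk] at this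
        exact absurd this (by simp)
  · -- from b * arr f = arr g
    cases b with
    | zero => simp [HMul.hMul, Mul.mul, cdZero_mul] at hb
    | one =>
      have : (Cd.arr f : Cd C) = Cd.arr g := by
        rw [← hb]; exact (cdOne_mul C _).symm
      cases this; rfl
    | arr k =>
      have : cdMul C (Cd.arr k) (Cd.arr f) = Cd.arr g := hb
      by_cases hk : C.tgt k = C.src f
      · rw [show cdMul C (Cd.arr k) (Cd.arr f) = Cd.arr (C.comp k f hk) from dif_pos hk] at this
        cases this
        exact (C.tgt_comp k f hk).symm
      · rw [show cdMul C (Cd.arr k) (Cd.arr f) = Cd.zero from dif_neg hk] at this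
        exact absurd this (by simp)
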